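/- Let m ≥ 1 and n ≥ 2m be integers with n > n_0 and 3n_0 − n_0²/n ≤ 4m, where n_0 is defined from the prime factorization of n as in the context. Then for every vector y of the following set, J̃(n,m) ∪ {y} is an m-distance set: if m < n_0, the set of all vectors with n − n_0 + m coordinates equal to n_0/n and n_0 − m coordinates equal to −1 + n_0/n; if m = n_0, the single vector all of whose n coordinates equal m/n; if m > n_0, the set of all vectors with m − n_0 coordinates equal to 1 + n_0/n and n + n_0 − m coordinates equal to n_0/n. -/

import Mathlib

noncomputable section

/-- The set of distances between distinct points of `S`. -/
def distSet {n : ℕ} (S : Set (EuclideanSpace ℝ (Fin n))) : Set ℝ :=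
  {d | ∃ x ∈ S, ∃ y ∈ S, x ≠ y ∧ d = dist x y}

/-- `S` is an `s`-distance set: exactly `s` distances occur between distinct points. -/
def IsSDistanceSet {n : ℕ} (s : ℕ) (S : Set (EuclideanSpace ℝ (Fin n))) : Prop :=
  (distSet S).Finite ∧ (distSet S).ncard = s

/-- The representation `J̃(n,m)` of the Johnson graph `J(n,m)`: vectors with exactly `m`
coordinates equal to `1` and the rest equal to `0`. -/
def JohnsonRep (n m : ℕ) : Set (EuclideanSpace ℝ (Fin n)) :=
  {x | (∀ i, x i = 0 ∨ x i = 1) ∧ {i : Fin n | x i = 1}.ncard = m}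

/-- The hyperplane `H(n,m) = {x : ∑ x_i = m}`. -/
def Hyp (n m : ℕ) : Set (EuclideanSpace ℝ (Fin n)) :=
  {x | ∑ i, x i = (m : ℝ)}

/-- For `n = 2^{e₀} ∏ pᵢ^{eᵢ}` (pᵢ odd primes), `nzero n` is
`∏ pᵢ^{⌈eᵢ/2⌉}` if `e₀ = 0` and `2^{⌈(e₀+1)/2⌉} ∏ pᵢ^{⌈eᵢ/2⌉}` if `e₀ > 0`. -/
def nzero (n : ℕ) : ℕ :=
  ∏ p ∈ n.primeFactors,
    p ^ (if p = 2 then n.factorization p / 2 + 1 else (n.factorization p + 1) / 2)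

/-! Write `N₀ = nzero n`. Its exponents are chosen so that `n ∣ N₀²` and `q = N₀² / n` has the
parity of `N₀`; as `N₀ < n`, this gives `N₀ = q + 2a` with `a ≥ 1`, and the second condition
becomes `q + 3a ≤ 2m`.

The distances in `J̃(n,m)` are the `√(2k)` with `1 ≤ k ≤ m`, all of which occur since `n ≥ 2m`.
Every admissible `y` is `(N₀/n)𝟙 + s 𝟙_P` with `s = ±1` and `m - s|P| = N₀` (`P = ∅` when
`m = N₀`), so for `x = 𝟙_A` with `t = |A ∩ P|` the cross terms collapse to
`|x - y|² = m + |P| - q - 2st`. This is `2(a + t)` for `s = -1` and `2(m - q - a - t)` for `s = 1`,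
again `2k` with `1 ≤ k ≤ m`. -/

open Finset

theorem exists_nzero_sq_eq_mul {n : ℕ} (hn : n ≠ 0) :
    ∃ q, nzero n ^ 2 = n * q ∧ (Even q ↔ Even (nzero n)) := by
  set f : ℕ → ℕ := fun p =>
    if p = 2 then n.factorization p / 2 + 1 else (n.factorization p + 1) / 2
  have hf : ∀ p, n.factorization p ≤ 2 * f p := fun p => by simp only [f]; split_ifs <;> omega
  have hnz : nzero n = ∏ p ∈ n.primeFactors, p ^ f p := rfl
  set r := ∏ p ∈ n.primeFactors, p ^ (2 * f p - n.factorization p)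
  have hsq : nzero n ^ 2 = n * r := by
    nth_rw 2 [← Nat.prod_factorization_pow_eq_self hn]
    rw [Finsupp.prod, Nat.support_factorization, ← prod_mul_distrib, hnz, ← prod_pow]
    refine prod_congr rfl fun p _ => ?_
    rw [← pow_mul, ← pow_add, Nat.add_sub_cancel' (hf p), mul_comm]
  refine ⟨r, hsq, ?_⟩
  by_cases h2 : 2 ∣ n
  · have h2mem : 2 ∈ n.primeFactors := Nat.mem_primeFactors.2 ⟨Nat.prime_two, h2, hn⟩
    have hf2 : n.factorization 2 < 2 * f 2 := by simp only [f, if_pos rfl]; omega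
    have hr : Even r := even_iff_two_dvd.2 <|
      (dvd_pow_self 2 (by omega)).trans (dvd_prod_of_mem _ h2mem)
    have hN : Even (nzero n) := even_iff_two_dvd.2 <| hnz ▸
      (dvd_pow_self 2 (by omega)).trans (dvd_prod_of_mem _ h2mem)
    exact iff_of_true hr hN
  · have hodd : ¬ Even n := by rwa [even_iff_two_dvd]
    have := congrArg Even hsq
    simp only [Nat.even_mul, Nat.even_pow, hodd, false_or] at this
    simpa [two_ne_zero] using this.symm

theorem nzero_pos (n : ℕ) : 0 < nzero n :=
  prod_pos fun _ hp => pow_pos (Nat.prime_of_mem_primeFactors hp).pos _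

theorem exists_nzero_sq_eq_mul_of_cond {n m : ℕ} (h1 : nzero n < n)
    (h2 : 3 * (nzero n : ℝ) - (nzero n : ℝ) ^ 2 / n ≤ 4 * m) :
    ∃ q a, nzero n ^ 2 = n * q ∧ nzero n = q + 2 * a ∧ 1 ≤ a ∧ q + 3 * a ≤ 2 * m := by
  have hn : n ≠ 0 := by omega
  obtain ⟨q, hq, hpar⟩ := exists_nzero_sq_eq_mul hn
  have hq_lt : q < nzero n :=
    Nat.lt_of_mul_lt_mul_left (a := n)
      (hq ▸ sq (nzero n) ▸ Nat.mul_lt_mul_of_pos_right h1 (nzero_pos n))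
  obtain ⟨a, ha⟩ : Even (nzero n - q) := (Nat.even_sub hq_lt.le).2 hpar.symm
  have hqR : (nzero n : ℝ) ^ 2 / n = q := by
    rw [div_eq_iff (by exact_mod_cast hn)]; exact_mod_cast hq.trans (mul_comm n q)
  have h2' : 3 * nzero n ≤ 4 * m + q := by
    rw [hqR] at h2
    exact_mod_cast (by linarith : (3 * nzero n : ℝ) ≤ 4 * m + q)
  exact ⟨q, a, hq, by omega, by omega, by omega⟩

section

variable {n : ℕ}

def indicatorVec (A : Finset (Fin n)) : EuclideanSpace ℝ (Fin n) :=
  WithLp.toLp 2 fun i => if i ∈ A then 1 else 0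

@[simp]
theorem indicatorVec_apply (A : Finset (Fin n)) (i : Fin n) :
    indicatorVec A i = if i ∈ A then 1 else 0 := rfl

theorem dist_indicatorVec_sq (A P : Finset (Fin n)) {y : EuclideanSpace ℝ (Fin n)} {c s : ℝ}
    (hy : ∀ i, y i = c + s * indicatorVec P i) :
    dist (indicatorVec A) y ^ 2 =
      #A + s ^ 2 * #P + n * c ^ 2 - 2 * s * #(A ∩ P) - 2 * c * (#A - s * #P) := by
  have hi : ∀ i, dist (indicatorVec A i) (y i) ^ 2 =
      indicatorVec A i + s ^ 2 * indicatorVec P i + c ^ 2 - 2 * s * indicatorVec (A ∩ P) i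
        - 2 * c * (indicatorVec A i - s * indicatorVec P i) := fun i => by
    rw [Real.dist_eq, sq_abs, hy]
    by_cases hA : i ∈ A <;> by_cases hP : i ∈ P <;> simp [hA, hP] <;> ring
  rw [EuclideanSpace.dist_sq_eq, sum_congr rfl fun i _ => hi i]
  simp only [sum_add_distrib, sum_sub_distrib, ← mul_sum, sum_const, card_univ, Fintype.card_fin,
    nsmul_eq_mul, indicatorVec_apply, sum_boole, filter_mem_eq_inter, univ_inter]

theorem mem_johnsonRep_iff {m : ℕ} {x : EuclideanSpace ℝ (Fin n)} :
    x ∈ JohnsonRep n m ↔ ∃ A : Finset (Fin n), #A = m ∧ indicatorVec A = x := by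
  constructor
  · rintro ⟨hx01, hxm⟩
    refine ⟨({i | x i = 1} : Finset (Fin n)), ?_, ?_⟩
    · rw [← Set.ncard_coe_finset, coe_filter]; simpa using hxm
    · ext i
      rcases hx01 i with h | h <;> simp [h]
  · rintro ⟨A, rfl, rfl⟩
    refine ⟨fun i => by by_cases h : i ∈ A <;> simp [h], ?_⟩
    simp

theorem dist_indicatorVec_indicatorVec_sq {m : ℕ} {A B : Finset (Fin n)} (hA : #A = m)
    (hB : #B = m) : dist (indicatorVec A) (indicatorVec B) ^ 2 = 2 * (m - #(A ∩ B) : ℝ) := by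
  rw [dist_indicatorVec_sq A B (c := 0) (s := 1) fun i => by simp, hA, hB]
  ring

def johnsonDists (m : ℕ) : Set ℝ :=
  (fun k : ℕ => √(2 * k)) '' Set.Icc 1 m

theorem mem_johnsonDists {m k : ℕ} {d : ℝ} (hk : 1 ≤ k) (hkm : k ≤ m) (hd : 0 ≤ d)
    (h : d ^ 2 = 2 * k) : d ∈ johnsonDists m :=
  ⟨k, ⟨hk, hkm⟩, by rw [← Real.sqrt_sq hd, h]⟩

theorem isSDistanceSet_of_distSet_eq_johnsonDists {m : ℕ} {S : Set (EuclideanSpace ℝ (Fin n))}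
    (h : distSet S = johnsonDists m) : IsSDistanceSet m S := by
  have hinj : Set.InjOn (fun k : ℕ => √(2 * k)) (Set.Icc 1 m) := fun k _ l _ hkl => by
    simpa using hkl
  refine ⟨h ▸ (Set.finite_Icc 1 m).image _, ?_⟩
  rw [h, johnsonDists, hinj.ncard_image, Set.ncard_eq_toFinset_card',
    Set.toFinset_Icc, Nat.card_Icc, Nat.add_sub_cancel]

theorem distSet_johnsonRep {m : ℕ} (hn : 2 * m ≤ n) :
    distSet (JohnsonRep n m) = johnsonDists m := by
  apply Set.Subset.antisymm
  · rintro d ⟨x, hx, x', hx', hne, rfl⟩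
    obtain ⟨A, hA, rfl⟩ := mem_johnsonRep_iff.1 hx
    obtain ⟨B, hB, rfl⟩ := mem_johnsonRep_iff.1 hx'
    have hlt : #(A ∩ B) < m := by
      refine (card_le_card inter_subset_left).trans_eq hA |>.lt_of_ne fun h => hne ?_
      have hAB : A ∩ B = A := eq_of_subset_of_card_le inter_subset_left (by omega)
      have hBA : A ∩ B = B := eq_of_subset_of_card_le inter_subset_right (by omega)
      rw [← hAB, hBA]
    refine mem_johnsonDists (k := m - #(A ∩ B)) (by omega) (by omega) dist_nonneg ?_
    rw [dist_indicatorVec_indicatorVec_sq hA hB, Nat.cast_sub hlt.le]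
  · rintro d ⟨k, ⟨hk, hkm⟩, rfl⟩
    obtain ⟨A, -, hA⟩ := exists_subset_card_eq (s := (univ : Finset (Fin n))) (n := m)
      (by rw [card_univ, Fintype.card_fin]; omega)
    obtain ⟨C, hCA, hC⟩ := exists_subset_card_eq (s := A) (n := m - k) (by omega)
    obtain ⟨D, hDA, hD⟩ := exists_subset_card_eq (s := Aᶜ) (n := k)
      (by rw [card_compl, Fintype.card_fin]; omega)
    have hdisj : Disjoint C D := disjoint_of_subset_left hCA (subset_compl_iff_disjoint_left.1 hDA)
    have hB : #(C ∪ D) = m := by rw [card_union_of_disjoint hdisj]; omega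
    have hAB : A ∩ (C ∪ D) = C := by
      rw [inter_union_distrib_left, inter_eq_right.2 hCA,
        disjoint_iff_inter_eq_empty.1 (subset_compl_iff_disjoint_left.1 hDA), union_empty]
    have hdist := dist_indicatorVec_indicatorVec_sq hA hB
    rw [hAB, hC, Nat.cast_sub (by omega)] at hdist
    refine ⟨indicatorVec A, mem_johnsonRep_iff.2 ⟨A, hA, rfl⟩, indicatorVec (C ∪ D),
      mem_johnsonRep_iff.2 ⟨_, hB, rfl⟩, fun h => ?_, ?_⟩
    · rw [h, dist_self] at hdist
      have : (1 : ℝ) ≤ k := by exact_mod_cast hk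
      nlinarith
    · rw [← Real.sqrt_sq dist_nonneg, hdist]
      ring_nf

theorem distSet_union_singleton {S : Set (EuclideanSpace ℝ (Fin n))} {D : Set ℝ}
    {y : EuclideanSpace ℝ (Fin n)} (hS : distSet S = D) (hy : ∀ x ∈ S, dist x y ∈ D) :
    distSet (S ∪ {y}) = D := by
  apply Set.Subset.antisymm
  · rintro d ⟨x, hx, x', hx', hne, rfl⟩
    rcases hx with hx | rfl <;> rcases hx' with hx' | rfl
    · exact hS ▸ ⟨x, hx, x', hx', hne, rfl⟩
    · exact hy x hx
    · exact dist_comm x x' ▸ hy x' hx'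
    · exact absurd rfl hne
  · rw [← hS]
    rintro d ⟨x, hx, x', hx', hne, rfl⟩
    exact ⟨x, Or.inl hx, x', Or.inl hx', hne, rfl⟩

theorem exists_eq_add_mul_indicatorVec {y : EuclideanSpace ℝ (Fin n)} {c s : ℝ} (hs : s ≠ 0)
    (h : n ≤ {i | y i = c}.ncard + {i | y i = s + c}.ncard) :
    ∃ P : Finset (Fin n), #P = {i | y i = s + c}.ncard ∧ ∀ i, y i = c + s * indicatorVec P i := by
  have hdisj : Disjoint {i | y i = c} {i | y i = s + c} :=
    Set.disjoint_left.2 fun i hc hsc => hs (by simp_all)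
  have hcover : {i | y i = c} ∪ {i | y i = s + c} = Set.univ :=
    Set.eq_of_subset_of_ncard_le (Set.subset_univ _)
      (by rwa [Set.ncard_union_eq hdisj, Set.ncard_univ, Nat.card_eq_fintype_card,
        Fintype.card_fin])
  refine ⟨({i | y i = s + c} : Finset (Fin n)),
    by rw [← Set.ncard_coe_finset, coe_filter]; simp, fun i => ?_⟩
  rcases hcover ▸ Set.mem_univ i with (hi : y i = c) | (hi : y i = s + c) <;>
    simp [hi, hs, add_comm]

theorem dist_indicatorVec_sq_of_eq_add {N0 q : ℕ} {A P : Finset (Fin n)}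
    {y : EuclideanSpace ℝ (Fin n)} {s : ℝ} (hn : n ≠ 0) (hs : s ^ 2 = 1) (hq : N0 ^ 2 = n * q)
    (hAP : #A - s * #P = N0) (hy : ∀ i, y i = N0 / n + s * indicatorVec P i) :
    dist (indicatorVec A) y ^ 2 = #A + #P - q - 2 * s * #(A ∩ P) := by
  have hqR : (q : ℝ) = N0 ^ 2 / n := by
    rw [eq_div_iff (by exact_mod_cast hn)]; exact_mod_cast (mul_comm n q ▸ hq).symm
  rw [dist_indicatorVec_sq A P hy, hAP, hs, hqR]
  field_simp
  ring

theorem dist_indicatorVec_mem_johnsonDists_of_le {m N0 q a : ℕ} {A P : Finset (Fin n)}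
    {y : EuclideanSpace ℝ (Fin n)} (hn : n ≠ 0) (hq : N0 ^ 2 = n * q) (ha : N0 = q + 2 * a)
    (ha1 : 1 ≤ a) (hm : q + 3 * a ≤ 2 * m) (hA : #A = m) (hP : m + #P = N0)
    (hy : ∀ i, y i = N0 / n + -1 * indicatorVec P i) :
    dist (indicatorVec A) y ∈ johnsonDists m := by
  have hAP : (#A : ℝ) - -1 * #P = N0 := by rw [hA, ← hP]; push_cast; ring
  have hd := dist_indicatorVec_sq_of_eq_add hn (by norm_num) hq hAP hy
  have ht : #(A ∩ P) ≤ #P := card_le_card inter_subset_right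
  refine mem_johnsonDists (k := a + #(A ∩ P)) (by omega) (by omega) dist_nonneg ?_
  have hP' : (m : ℝ) + #P = q + 2 * a := by exact_mod_cast hP.trans ha
  rw [hd, hA]
  push_cast
  linarith

theorem dist_indicatorVec_mem_johnsonDists_of_lt {m N0 q a : ℕ} {A P : Finset (Fin n)}
    {y : EuclideanSpace ℝ (Fin n)} (hn : n ≠ 0) (hq : N0 ^ 2 = n * q) (ha : N0 = q + 2 * a)
    (ha1 : 1 ≤ a) (hA : #A = m) (hP : N0 + #P = m)
    (hy : ∀ i, y i = N0 / n + 1 * indicatorVec P i) :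
    dist (indicatorVec A) y ∈ johnsonDists m := by
  have hAP : (#A : ℝ) - 1 * #P = N0 := by rw [hA, ← hP]; push_cast; ring
  have hd := dist_indicatorVec_sq_of_eq_add hn (by norm_num) hq hAP hy
  have ht : #(A ∩ P) ≤ #P := card_le_card inter_subset_right
  refine mem_johnsonDists (k := m - q - a - #(A ∩ P)) (by omega) (by omega) dist_nonneg ?_
  have hP' : (q : ℝ) + 2 * a + #P = m := by exact_mod_cast ha ▸ hP
  rw [hd, hA, Nat.cast_sub (by omega), Nat.cast_sub (by omega), Nat.cast_sub (by omega)]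
  linarith

end

theorem add_vector_of_cond_general (n m : ℕ) (hn : 2 * m ≤ n)
    (h1 : nzero n < n)
    (h2 : 3 * (nzero n : ℝ) - (nzero n : ℝ) ^ 2 / n ≤ 4 * m)
    (y : EuclideanSpace ℝ (Fin n))
    (hy :
      (m < nzero n ∧
        {i : Fin n | y i = (nzero n : ℝ) / n}.ncard = n - nzero n + m ∧
        {i : Fin n | y i = -1 + (nzero n : ℝ) / n}.ncard = nzero n - m) ∨
      (m = nzero n ∧ ∀ i, y i = (m : ℝ) / n) ∨
      (nzero n < m ∧
        {i : Fin n | y i = 1 + (nzero n : ℝ) / n}.ncard = m - nzero n ∧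
        {i : Fin n | y i = (nzero n : ℝ) / n}.ncard = n + nzero n - m)) :
    IsSDistanceSet m (JohnsonRep n m ∪ {y}) := by
  have hn0 : n ≠ 0 := by omega
  obtain ⟨q, a, hq, ha, ha1, hm⟩ := exists_nzero_sq_eq_mul_of_cond h1 h2
  have hdist : ∀ x ∈ JohnsonRep n m, dist x y ∈ johnsonDists m := by
    intro x hx
    obtain ⟨A, hA, rfl⟩ := mem_johnsonRep_iff.1 hx
    rcases hy with ⟨hlt, hc, hP⟩ | ⟨rfl, hy⟩ | ⟨hgt, hP, hc⟩
    · obtain ⟨P, hPcard, hyP⟩ := exists_eq_add_mul_indicatorVec (y := y)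
        (c := (nzero n : ℝ) / n) (s := -1) (by norm_num) (by rw [hc, hP]; omega)
      exact dist_indicatorVec_mem_johnsonDists_of_le hn0 hq ha ha1 hm hA (by omega) hyP
    · exact dist_indicatorVec_mem_johnsonDists_of_le (P := ∅) hn0 hq ha ha1 hm hA (by simp)
        fun i => by simp [hy]
    · obtain ⟨P, hPcard, hyP⟩ := exists_eq_add_mul_indicatorVec (y := y)
        (c := (nzero n : ℝ) / n) (s := 1) (by norm_num) (by rw [hc, hP]; omega)
      exact dist_indicatorVec_mem_johnsonDists_of_lt hn0 hq ha ha1 hA (by omega) hyP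
  exact isSDistanceSet_of_distSet_eq_johnsonDists
    (distSet_union_singleton (distSet_johnsonRep hn) hdist)

theorem add_vector_of_cond (n m : ℕ) (hm : 1 ≤ m) (hn : 2 * m ≤ n)
    (h1 : nzero n < n)
    (h2 : 3 * (nzero n : ℝ) - (nzero n : ℝ) ^ 2 / n ≤ 4 * m)
    (y : EuclideanSpace ℝ (Fin n))
    (hy :
      (m < nzero n ∧
        {i : Fin n | y i = (nzero n : ℝ) / n}.ncard = n - nzero n + m ∧
        {i : Fin n | y i = -1 + (nzero n : ℝ) / n}.ncard = nzero n - m) ∨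
      (m = nzero n ∧ ∀ i, y i = (m : ℝ) / n) ∨
      (nzero n < m ∧
        {i : Fin n | y i = 1 + (nzero n : ℝ) / n}.ncard = m - nzero n ∧
        {i : Fin n | y i = (nzero n : ℝ) / n}.ncard = n + nzero n - m)) :
    IsSDistanceSet m (JohnsonRep n m ∪ {y}) :=
  add_vector_of_cond_general n m hn h1 h2 y hy
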